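/- arXiv:2410.07206 — 7 statements merged into one kernel-verified Lean document; each statement's English description precedes it below -/
import Mathlib

section
/- Let a⁺, a⁻, b ∈ (0,1]. Then there exists x ∈ [0,1] satisfying (a⁺ · x) ⊔ (a⁻ · n_P(x)) = b if and only if a⁻ = b or b ≤ a⁺. -/
open Set

noncomputable def nP (x : ℝ) : ℝ := if x = 0 then 1 else 0

noncomputable def resP (z a : ℝ) : ℝ := if a = 0 then 1 else min 1 (z / a)

noncomputable def bSup {m : ℕ} (hm : 1 ≤ m) (f : Fin m → ℝ) : ℝ :=
  Finset.univ.sup' ⟨⟨0, hm⟩, Finset.mem_univ _⟩ f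

noncomputable def bInf {m : ℕ} (hm : 1 ≤ m) (f : Fin m → ℝ) : ℝ :=
  Finset.univ.inf' ⟨⟨0, hm⟩, Finset.mem_univ _⟩ f

theorem stmt3 (ap am b : ℝ) (hap : ap ∈ Ioc (0:ℝ) 1) (ham : am ∈ Ioc (0:ℝ) 1)
    (hb : b ∈ Ioc (0:ℝ) 1) :
    (∃ x ∈ Icc (0:ℝ) 1, (ap * x) ⊔ (am * nP x) = b) ↔ (am = b ∨ b ≤ ap) := by
  obtain ⟨hap0, hap1⟩ := hap
  obtain ⟨ham0, ham1⟩ := ham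
  obtain ⟨hb0, hb1⟩ := hb
  constructor
  · rintro ⟨x, ⟨hx0, hx1⟩, hx⟩
    by_cases h : x = 0
    · left
      simp only [nP, h, if_pos, mul_zero, mul_one] at hx
      rw [max_eq_right ham0.le] at hx
      exact hx
    · right
      simp only [nP, if_neg h, mul_zero] at hx
      have hxp : 0 < x := lt_of_le_of_ne hx0 (Ne.symm h)
      rw [max_eq_left (by positivity)] at hx
      nlinarith
  · rintro (h | h)
    · exact ⟨0, ⟨le_refl 0, zero_le_one⟩, by norm_num [nP]; rw [max_eq_right ham0.le]; exact h⟩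
    · refine ⟨b / ap, ⟨by positivity, by rw [div_le_one hap0]; linarith⟩, ?_⟩
      have hne : b / ap ≠ 0 := by positivity
      simp only [nP, if_neg hne, mul_zero]
      rw [max_eq_left (by positivity)]
      field_simp
end

section
/- Let m ≥ 1, and let a⁺, a⁻ : Fin m → [0,1]. Then there exists x : Fin m → [0,1] such that ⋁_{j} ((a⁺_j · x_j) ⊔ (a⁻_j · n_P(x_j))) = 0 if and only if for every j ∈ Fin m, a⁺_j = 0 or a⁻_j = 0. -/
open Set

theorem stmt5 (m : ℕ) (hm : 1 ≤ m) (ap am : Fin m → ℝ)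
    (hap : ∀ j, ap j ∈ Icc (0:ℝ) 1) (ham : ∀ j, am j ∈ Icc (0:ℝ) 1) :
    (∃ x : Fin m → ℝ, (∀ j, x j ∈ Icc (0:ℝ) 1) ∧
      bSup hm (fun j => (ap j * x j) ⊔ (am j * nP (x j))) = 0) ↔
    (∀ j, ap j = 0 ∨ am j = 0) := by
  constructor
  · rintro ⟨x, hx, hsup⟩ j
    have hle : (ap j * x j) ⊔ (am j * nP (x j)) ≤ 0 := by
      rw [← hsup]
      exact Finset.le_sup' (fun j => (ap j * x j) ⊔ (am j * nP (x j))) (Finset.mem_univ j)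
    have hnP : 0 ≤ nP (x j) := by unfold nP; split <;> norm_num
    have h1 : ap j * x j ≤ 0 := le_trans le_sup_left hle
    have h2 : am j * nP (x j) ≤ 0 := le_trans le_sup_right hle
    have h1' : ap j * x j = 0 :=
      le_antisymm h1 (mul_nonneg (hap j).1 (hx j).1)
    have h2' : am j * nP (x j) = 0 :=
      le_antisymm h2 (mul_nonneg (ham j).1 hnP)
    rcases mul_eq_zero.mp h1' with h | h
    · exact Or.inl h
    · right
      have : nP (x j) = 1 := by unfold nP; simp [h]
      rcases mul_eq_zero.mp h2' with h' | h'
      · exact h'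
      · rw [this] at h'; norm_num at h'
  · intro h
    refine ⟨fun j => if ap j = 0 then 1 else 0, fun j => ?_, ?_⟩
    · simp only []; split <;> norm_num
    · apply le_antisymm
      · apply Finset.sup'_le
        intro j _
        by_cases hj : ap j = 0
        · simp only [hj, if_pos]
          have : nP (1:ℝ) = 0 := by unfold nP; norm_num
          simp [this, hj]
        · rcases h j with h' | h'
          · exact absurd h' hj
          · simp [hj, h']
      · have := Finset.le_sup' (f := fun j => (ap j * (if ap j = 0 then (1:ℝ) else 0)) ⊔ (am j * nP (if ap j = 0 then (1:ℝ) else 0))) (Finset.mem_univ (⟨0, hm⟩ : Fin m))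
        refine le_trans ?_ this
        set j : Fin m := ⟨0, hm⟩
        have hnP : 0 ≤ nP (if ap j = 0 then (1:ℝ) else 0) := by
          unfold nP; split <;> norm_num
        have : 0 ≤ ap j * (if ap j = 0 then (1:ℝ) else 0) :=
          mul_nonneg (hap j).1 (by split <;> norm_num)
        exact le_trans this le_sup_left
end

section
/- Let m ≥ 1, a⁺, a⁻ : Fin m → [0,1], and b ∈ (0,1]. Then there exists x : Fin m → [0,1] such that ⋁_{j} ((a⁺_j · x_j) ⊔ (a⁻_j · n_P(x_j))) = b if and only if b ≤ max_{j} a⁺_j or there exists k ∈ Fin m with a⁻_k = b. -/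
open Set

lemma resP_pos (z a : ℝ) (ha : 0 ≤ a) (hz : 0 < z) : 0 < resP z a := by
  unfold resP
  split_ifs with h
  · norm_num
  · exact lt_min one_pos (div_pos hz (lt_of_le_of_ne ha (Ne.symm h)))

lemma resP_le_one (z a : ℝ) : resP z a ≤ 1 := by
  unfold resP
  split_ifs with h
  · exact le_refl 1
  · exact min_le_left _ _

lemma mul_resP_le (a z : ℝ) (ha : 0 ≤ a) (hz : 0 ≤ z) : a * resP z a ≤ z ⊓ a := by
  unfold resP
  split_ifs with h
  · simp [h, le_min hz (le_refl (0:ℝ))]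
  · have ha' : 0 < a := lt_of_le_of_ne ha (Ne.symm h)
    rw [mul_min_of_nonneg _ _ ha, mul_one, mul_div_cancel₀ _ (ne_of_gt ha')]
    rw [min_comm]

theorem stmt6 (m : ℕ) (hm : 1 ≤ m) (ap am : Fin m → ℝ) (b : ℝ)
    (hap : ∀ j, ap j ∈ Icc (0:ℝ) 1) (ham : ∀ j, am j ∈ Icc (0:ℝ) 1)
    (hb : b ∈ Ioc (0:ℝ) 1) :
    (∃ x : Fin m → ℝ, (∀ j, x j ∈ Icc (0:ℝ) 1) ∧
      bSup hm (fun j => (ap j * x j) ⊔ (am j * nP (x j))) = b) ↔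
    (b ≤ bSup hm ap ∨ ∃ k, am k = b) := by
  obtain ⟨hb0, hb1⟩ := hb
  constructor
  · rintro ⟨x, hx, hsup⟩
    obtain ⟨j, -, hj⟩ := Finset.exists_mem_eq_sup' (⟨⟨0, hm⟩, Finset.mem_univ _⟩ :
      Finset.univ.Nonempty) (fun j => (ap j * x j) ⊔ (am j * nP (x j)))
    rw [bSup] at hsup
    rw [hsup] at hj
    rcases max_choice (ap j * x j) (am j * nP (x j)) with h | h
    · left
      have h1 : ap j * x j = b := h.symm.trans hj.symm
      have : b ≤ ap j := by
        calc b = ap j * x j := h1.symm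
        _ ≤ ap j * 1 := mul_le_mul_of_nonneg_left (hx j).2 (hap j).1
        _ = ap j := mul_one _
      exact le_trans this (Finset.le_sup' _ (Finset.mem_univ j))
    · right
      have h1 : am j * nP (x j) = b := h.symm.trans hj.symm
      by_cases hxj : x j = 0
      · exact ⟨j, by simpa [nP, hxj] using h1⟩
      · simp [nP, hxj] at h1; linarith
  · intro h
    -- construct x
    have key : ∀ (k : Fin m), (ap k * resP b (ap k) ⊔ am k * nP (resP b (ap k))) =
        ap k * resP b (ap k) ∧ ap k * resP b (ap k) ≤ b := by
      intro k
      have hpos := resP_pos b (ap k) (hap k).1 hb0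
      have hle := mul_resP_le (ap k) b (hap k).1 (le_of_lt hb0)
      constructor
      · simp [nP, ne_of_gt hpos, mul_nonneg (hap k).1 (le_of_lt hpos)]
      · exact le_trans hle (min_le_left _ _)
    rcases h with hle | ⟨k, hk⟩
    · -- exists k with b ≤ ap k
      obtain ⟨k, -, hk⟩ := Finset.exists_mem_eq_sup' (⟨⟨0, hm⟩, Finset.mem_univ _⟩ :
        Finset.univ.Nonempty) ap
      rw [bSup, hk] at hle
      refine ⟨fun j => resP b (ap j), fun j => ⟨le_of_lt (resP_pos b (ap j) (hap j).1 hb0),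
        resP_le_one _ _⟩, le_antisymm ?_ ?_⟩
      · apply Finset.sup'_le
        intro j _
        rw [(key j).1]
        exact (key j).2
      · have : ap k * resP b (ap k) = b := by
          have := mul_resP_le (ap k) b (hap k).1 (le_of_lt hb0)
          have h2 : b ⊓ ap k = b := min_eq_left hle
          have h3 : ap k * resP b (ap k) ≥ b := by
            unfold resP
            split_ifs with h0
            · rw [h0] at hle; linarith
            · have hak : 0 < ap k := lt_of_lt_of_le hb0 hle
              have : min 1 (b / ap k) = b / ap k := min_eq_right (by
                rw [div_le_one hak]; exact hle)
              rw [this, mul_div_cancel₀ _ (ne_of_gt hak)]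
          linarith [le_trans this (min_le_left b (ap k))]
        have h4 := Finset.le_sup' (f := fun j => (ap j * resP b (ap j)) ⊔ (am j * nP (resP b (ap j)))) (Finset.mem_univ k)
        rw [(key k).1, this] at h4
        exact h4
    · -- am k = b; x k = 0
      classical
      refine ⟨fun j => if j = k then 0 else resP b (ap j), fun j => ?_, le_antisymm ?_ ?_⟩
      · dsimp only
        split_ifs
        · exact ⟨le_refl 0, zero_le_one⟩
        · exact ⟨le_of_lt (resP_pos b (ap j) (hap j).1 hb0), resP_le_one _ _⟩
      · apply Finset.sup'_le
        intro j _
        by_cases hjk : j = k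
        · simp [hjk, nP, hk, mul_zero, (hap k).1, le_of_lt hb0]
        · simp only [if_neg hjk]
          rw [(key j).1]
          exact (key j).2
      · have h5 : ((ap k * (if k = k then (0:ℝ) else resP b (ap k))) ⊔ (am k * nP (if k = k then (0:ℝ) else resP b (ap k)))) = b := by
          simp [nP, hk, le_of_lt hb0]
        exact le_of_eq_of_le h5.symm (Finset.le_sup' (f := fun j => ap j * (fun j => if j = k then (0:ℝ) else resP b (ap j)) j ⊔ am j * nP ((fun j => if j = k then (0:ℝ) else resP b (ap j)) j)) (Finset.mem_univ k))
end

section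
/- Let m ≥ 1, a⁺, a⁻ : Fin m → [0,1], and b ∈ (0,1]. Assume a⁺_j < b for every j, and that some k satisfies a⁻_k = b. Then for each k with a⁻_k = b, the tuple x^(k) with x^(k)_k = 0 and x^(k)_j = 1 for j ≠ k is a maximal solution of ⋁_{j} ((a⁺_j · x_j) ⊔ (a⁻_j · n_P(x_j))) = b, and every maximal solution of this equation is of this form. Consequently the number of maximal solutions equals the cardinality of {k : a⁻_k = b}. -/
open Set

theorem stmt8 (m : ℕ) (hm : 1 ≤ m) (ap am : Fin m → ℝ) (b : ℝ)
    (hap : ∀ j, ap j ∈ Icc (0:ℝ) 1) (ham : ∀ j, am j ∈ Icc (0:ℝ) 1)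
    (hb : b ∈ Ioc (0:ℝ) 1) (hlt : ∀ j, ap j < b) (hex : ∃ k, am k = b) :
    (∀ k, am k = b →
      ((∀ j, (fun j => if j = k then (0:ℝ) else 1) j ∈ Icc (0:ℝ) 1) ∧
        bSup hm (fun j => (ap j * (if j = k then (0:ℝ) else 1)) ⊔
          (am j * nP (if j = k then (0:ℝ) else 1))) = b) ∧
      ∀ y : Fin m → ℝ, (∀ j, y j ∈ Icc (0:ℝ) 1) →
        bSup hm (fun j => (ap j * y j) ⊔ (am j * nP (y j))) = b →
        ¬ (fun j => if j = k then (0:ℝ) else 1) < y) ∧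
    (∀ x : Fin m → ℝ,
      ((∀ j, x j ∈ Icc (0:ℝ) 1) ∧
        bSup hm (fun j => (ap j * x j) ⊔ (am j * nP (x j))) = b ∧
        ∀ y : Fin m → ℝ, (∀ j, y j ∈ Icc (0:ℝ) 1) →
          bSup hm (fun j => (ap j * y j) ⊔ (am j * nP (y j))) = b → ¬ x < y) →
      ∃ k, am k = b ∧ x = fun j => if j = k then (0:ℝ) else 1) ∧
    {x : Fin m → ℝ | (∀ j, x j ∈ Icc (0:ℝ) 1) ∧
        bSup hm (fun j => (ap j * x j) ⊔ (am j * nP (x j))) = b ∧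
        ∀ y : Fin m → ℝ, (∀ j, y j ∈ Icc (0:ℝ) 1) →
          bSup hm (fun j => (ap j * y j) ⊔ (am j * nP (y j))) = b → ¬ x < y}.ncard =
      {k : Fin m | am k = b}.ncard := by
  obtain ⟨hb0, hb1⟩ := hb
  -- term simplification
  have hterm : ∀ (x : Fin m → ℝ), (∀ j, x j ∈ Icc (0:ℝ) 1) → ∀ j,
      (ap j * x j) ⊔ (am j * nP (x j)) = if x j = 0 then am j else ap j * x j := by
    intro x hx j
    by_cases h : x j = 0
    · simp [nP, h, (ham j).1]
    · simp [nP, h]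
      have : (0:ℝ) ≤ ap j * x j := mul_nonneg (hap j).1 (hx j).1
      linarith
  -- solution characterization
  have key : ∀ (x : Fin m → ℝ), (∀ j, x j ∈ Icc (0:ℝ) 1) →
      (bSup hm (fun j => (ap j * x j) ⊔ (am j * nP (x j))) = b ↔
        (∀ j, x j = 0 → am j ≤ b) ∧ ∃ j, x j = 0 ∧ am j = b) := by
    intro x hx
    unfold bSup
    constructor
    · intro hsol
      have hle : ∀ j, (ap j * x j) ⊔ (am j * nP (x j)) ≤ b := by
        intro j
        rw [← hsol]
        exact Finset.le_sup' (fun j => (ap j * x j) ⊔ (am j * nP (x j))) (Finset.mem_univ j)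
      constructor
      · intro j hj
        have := hle j
        rwa [hterm x hx j, if_pos hj] at this
      · obtain ⟨j, _, hj⟩ := Finset.exists_mem_eq_sup' (⟨⟨0, hm⟩, Finset.mem_univ _⟩ :
          (Finset.univ : Finset (Fin m)).Nonempty)
          (fun j => (ap j * x j) ⊔ (am j * nP (x j)))
        have hjb : ((ap j * x j) ⊔ (am j * nP (x j))) = b := by
          rw [← hsol]; exact hj.symm
        rw [hterm x hx j] at hjb
        by_cases h : x j = 0
        · exact ⟨j, h, by rwa [if_pos h] at hjb⟩
        · exfalso
          rw [if_neg h] at hjb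
          have : ap j * x j ≤ ap j * 1 :=
            mul_le_mul_of_nonneg_left (hx j).2 (hap j).1
          have := hlt j
          nlinarith
    · rintro ⟨hall, j0, hj0, hj0b⟩
      apply le_antisymm
      · apply Finset.sup'_le
        intro j _
        rw [hterm x hx j]
        by_cases h : x j = 0
        · rw [if_pos h]; exact hall j h
        · rw [if_neg h]
          have : ap j * x j ≤ ap j * 1 :=
            mul_le_mul_of_nonneg_left (hx j).2 (hap j).1
          have := hlt j
          linarith
      · calc b = (ap j0 * x j0) ⊔ (am j0 * nP (x j0)) := by
              rw [hterm x hx j0, if_pos hj0, hj0b]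
          _ ≤ _ := Finset.le_sup' (fun j => (ap j * x j) ⊔ (am j * nP (x j))) (Finset.mem_univ j0)
  -- the candidate vectors
  have hxk_mem : ∀ k : Fin m, ∀ j, (fun j => if j = k then (0:ℝ) else 1) j ∈ Icc (0:ℝ) 1 := by
    intro k j
    by_cases h : j = k <;> simp [h]
  have hxk_sol : ∀ k : Fin m, am k = b →
      bSup hm (fun j => (ap j * (if j = k then (0:ℝ) else 1)) ⊔
        (am j * nP (if j = k then (0:ℝ) else 1))) = b := by
    intro k hk
    rw [key _ (hxk_mem k)]
    constructor
    · intro j hj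
      by_cases h : j = k
      · rw [h, hk]
      · simp [h] at hj
    · exact ⟨k, by simp, hk⟩
  have hxk_max : ∀ k : Fin m, ∀ y : Fin m → ℝ, (∀ j, y j ∈ Icc (0:ℝ) 1) →
      bSup hm (fun j => (ap j * y j) ⊔ (am j * nP (y j))) = b →
      ¬ (fun j => if j = k then (0:ℝ) else 1) < y := by
    intro k y hy hysol hlt'
    rw [Pi.lt_def] at hlt'
    obtain ⟨hle, i, hi⟩ := hlt'
    rw [key y hy] at hysol
    obtain ⟨_, j, hj0, _⟩ := hysol
    have hi' : (if i = k then (0:ℝ) else 1) < y i := hi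
    have hyk : 0 < y k := by
      by_cases hik : i = k
      · rw [if_pos hik] at hi'
        rw [← hik]; exact hi'
      · exfalso
        rw [if_neg hik] at hi'
        exact absurd (hy i).2 (not_le.mpr hi')
    have hypos : ∀ j, 0 < y j := by
      intro j
      by_cases h : j = k
      · rw [h]; exact hyk
      · have hlej : (if j = k then (0:ℝ) else 1) ≤ y j := hle j
        rw [if_neg h] at hlej
        linarith
    exact absurd hj0 (hypos j).ne'
  -- converse: every maximal solution is of the form
  have hconv : ∀ x : Fin m → ℝ,
      ((∀ j, x j ∈ Icc (0:ℝ) 1) ∧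
        bSup hm (fun j => (ap j * x j) ⊔ (am j * nP (x j))) = b ∧
        ∀ y : Fin m → ℝ, (∀ j, y j ∈ Icc (0:ℝ) 1) →
          bSup hm (fun j => (ap j * y j) ⊔ (am j * nP (y j))) = b → ¬ x < y) →
      ∃ k, am k = b ∧ x = fun j => if j = k then (0:ℝ) else 1 := by
    rintro x ⟨hx, hsol, hmax⟩
    rw [key x hx] at hsol
    obtain ⟨_, k, hk0, hkb⟩ := hsol
    refine ⟨k, hkb, ?_⟩
    have hle : x ≤ fun j => if j = k then (0:ℝ) else 1 := by
      intro j
      by_cases h : j = k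
      · simp [h, hk0, h ▸ hk0]
      · simp [h, (hx j).2]
    have := hmax _ (hxk_mem k) (hxk_sol k hkb)
    rcases eq_or_lt_of_le hle with h | h
    · exact h
    · exact absurd h this
  refine ⟨fun k hk => ⟨⟨hxk_mem k, hxk_sol k hk⟩, hxk_max k⟩, hconv, ?_⟩
  -- cardinality
  have hset : {x : Fin m → ℝ | (∀ j, x j ∈ Icc (0:ℝ) 1) ∧
        bSup hm (fun j => (ap j * x j) ⊔ (am j * nP (x j))) = b ∧
        ∀ y : Fin m → ℝ, (∀ j, y j ∈ Icc (0:ℝ) 1) →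
          bSup hm (fun j => (ap j * y j) ⊔ (am j * nP (y j))) = b → ¬ x < y} =
      (fun k : Fin m => fun j => if j = k then (0:ℝ) else 1) '' {k : Fin m | am k = b} := by
    ext x
    constructor
    · intro hx
      obtain ⟨k, hk, hxk⟩ := hconv x hx
      exact ⟨k, hk, hxk.symm⟩
    · rintro ⟨k, hk, rfl⟩
      exact ⟨hxk_mem k, hxk_sol k hk, hxk_max k⟩
  rw [hset]
  apply Set.ncard_image_of_injective
  intro k k' h
  by_contra hne
  have := congrFun h k
  simp [hne] at this
end

section
/- Let m ≥ 1, a⁺, a⁻ : Fin m → [0,1], and b ∈ (0,1]. Assume there exist k₁, k₂ with a⁻_{k₁} = b and a⁻_{k₂} > b, and assume the equation ⋁_{j} ((a⁺_j · x_j) ⊔ (a⁻_j · n_P(x_j))) = b is solvable. Then its set of solutions has no minimal elements: for every solution x there exists a solution y with y < x (componentwise ≤ and y ≠ x). -/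
open Set

theorem stmt10 (m : ℕ) (hm : 1 ≤ m) (ap am : Fin m → ℝ) (b : ℝ)
    (hap : ∀ j, ap j ∈ Icc (0:ℝ) 1) (ham : ∀ j, am j ∈ Icc (0:ℝ) 1)
    (hb : b ∈ Ioc (0:ℝ) 1)
    (hk1 : ∃ k₁, am k₁ = b) (hk2 : ∃ k₂, b < am k₂) :
    ∀ x : Fin m → ℝ, (∀ j, x j ∈ Icc (0:ℝ) 1) →
      bSup hm (fun j => (ap j * x j) ⊔ (am j * nP (x j))) = b →
      ∃ y : Fin m → ℝ, (∀ j, y j ∈ Icc (0:ℝ) 1) ∧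
        bSup hm (fun j => (ap j * y j) ⊔ (am j * nP (y j))) = b ∧ y < x := by
  obtain ⟨k₁, hk1⟩ := hk1
  obtain ⟨k₂, hk2⟩ := hk2
  intro x hx hsol
  have hne : k₁ ≠ k₂ := by rintro rfl; linarith
  unfold bSup at hsol ⊢
  have hall : ∀ j, (ap j * x j) ⊔ (am j * nP (x j)) ≤ b := by
    intro j
    rw [← hsol]
    exact Finset.le_sup' (fun j => (ap j * x j) ⊔ (am j * nP (x j))) (Finset.mem_univ j)
  have hx2 : x k₂ ≠ 0 := by
    intro h
    have h1 := hall k₂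
    rw [h] at h1
    simp [nP] at h1
    linarith [h1.2]
  have hx2pos : 0 < x k₂ := lt_of_le_of_ne (hx k₂).1 (Ne.symm hx2)
  by_cases hx1 : x k₁ = 0
  · -- decrease the k₂ coordinate
    refine ⟨Function.update x k₂ (x k₂ / 2), ?_, ?_, ?_⟩
    · intro j
      by_cases hj : j = k₂
      · rw [hj, Function.update_self]
        constructor <;> nlinarith [(hx k₂).1, (hx k₂).2]
      · rw [Function.update_of_ne hj]; exact hx j
    · apply le_antisymm
      · apply Finset.sup'_le
        intro j _
        by_cases hj : j = k₂
        · rw [hj, Function.update_self]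
          have hnp : nP (x k₂ / 2) = 0 := by
            simp only [nP, ite_eq_right_iff]; intro h; linarith
          rw [hnp, mul_zero]
          have h1 := hall k₂
          have h2 : ap k₂ * (x k₂ / 2) ≤ ap k₂ * x k₂ := by
            nlinarith [(hap k₂).1]
          rw [sup_le_iff]
          exact ⟨le_trans h2 (le_trans (le_max_left _ _) h1), hb.1.le⟩
        · rw [Function.update_of_ne hj]; exact hall j
      · have key : (ap k₁ * Function.update x k₂ (x k₂ / 2) k₁) ⊔
            (am k₁ * nP (Function.update x k₂ (x k₂ / 2) k₁)) = (ap k₁ * 0) ⊔ (am k₁ * 1) := by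
          rw [Function.update_of_ne hne, hx1]; simp [nP]
        calc b = am k₁ * 1 := by rw [hk1, mul_one]
          _ ≤ (ap k₁ * 0) ⊔ (am k₁ * 1) := le_max_right _ _
          _ = _ := key.symm
          _ ≤ _ := Finset.le_sup'
              (fun j => (ap j * Function.update x k₂ (x k₂ / 2) j) ⊔
                (am j * nP (Function.update x k₂ (x k₂ / 2) j))) (Finset.mem_univ k₁)
    · rw [Pi.lt_def]
      constructor
      · intro j
        by_cases hj : j = k₂
        · rw [hj, Function.update_self]; linarith
        · rw [Function.update_of_ne hj]
      · exact ⟨k₂, by rw [Function.update_self]; linarith⟩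
  · -- set the k₁ coordinate to 0
    have hx1pos : 0 < x k₁ := lt_of_le_of_ne (hx k₁).1 (Ne.symm hx1)
    refine ⟨Function.update x k₁ 0, ?_, ?_, ?_⟩
    · intro j
      by_cases hj : j = k₁
      · rw [hj, Function.update_self]; exact ⟨le_refl _, by linarith [hb.2]⟩
      · rw [Function.update_of_ne hj]; exact hx j
    · apply le_antisymm
      · apply Finset.sup'_le
        intro j _
        by_cases hj : j = k₁
        · rw [hj, Function.update_self]
          simp [nP, hk1]
          exact hb.1.le
        · rw [Function.update_of_ne hj]; exact hall j
      · have key : (ap k₁ * Function.update x k₁ 0 k₁) ⊔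
            (am k₁ * nP (Function.update x k₁ 0 k₁)) = (ap k₁ * 0) ⊔ (am k₁ * 1) := by
          simp [nP]
        calc b = am k₁ * 1 := by rw [hk1, mul_one]
          _ ≤ (ap k₁ * 0) ⊔ (am k₁ * 1) := le_max_right _ _
          _ = _ := key.symm
          _ ≤ _ := Finset.le_sup'
              (fun j => (ap j * Function.update x k₁ 0 j) ⊔
                (am j * nP (Function.update x k₁ 0 j))) (Finset.mem_univ k₁)
    · rw [Pi.lt_def]
      constructor
      · intro j
        by_cases hj : j = k₁
        · rw [hj, Function.update_self]; exact (hx j).1.trans (by rw [hj])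
        · rw [Function.update_of_ne hj]
      · exact ⟨k₁, by rw [Function.update_self]; exact hx1pos⟩
end

section
/- Let m ≥ 1, a⁺, a⁻ : Fin m → [0,1], and b ∈ (0,1]. Assume a⁻_j ≠ b for every j, and that the equation ⋁_{j} ((a⁺_j · x_j) ⊔ (a⁻_j · n_P(x_j))) = b is solvable. Then the set of minimal solutions is exactly {x^(k) : k ∈ K}, where K = {k : a⁺_k ≥ b and a⁻_j < b for all j ≠ k}, and x^(k) is the tuple with x^(k)_k = b / a⁺_k and x^(k)_j = 0 for j ≠ k. In particular, the number of minimal solutions equals the cardinality of K. -/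
/-!
A minimal solution `x` has a coordinate `k` whose term equals `b`. Every other coordinate
vanishes: halving a positive `x j`, `j ≠ k`, raises no term and keeps the `k`-th term at `b`, so
it would give a smaller solution. A solution supported on `{k}` can only reach `b` through
`a⁺_k x_k`, because each `j` with `x_j = 0` contributes `a⁻_j ≠ b`; hence `x_k = b / a⁺_k`,
which forces `a⁺_k ≥ b`, and the terms `a⁻_j` with `j ≠ k` must be `< b`. Conversely such an
`x^(k)` is a solution, and every solution below it is again supported on `{k}`, hence equal to it.
-/

open Set

lemma bSup_eq_iff {m : ℕ} (hm : 1 ≤ m) (f : Fin m → ℝ) (b : ℝ) :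
    bSup hm f = b ↔ (∀ j, f j ≤ b) ∧ ∃ j, f j = b := by
  unfold bSup
  constructor
  · rintro rfl
    obtain ⟨j, -, hj⟩ := Finset.exists_mem_eq_sup' ⟨⟨0, hm⟩, Finset.mem_univ _⟩ f
    exact ⟨fun i => Finset.le_sup' f (Finset.mem_univ i), j, hj.symm⟩
  · rintro ⟨hle, j, rfl⟩
    exact le_antisymm (Finset.sup'_le _ _ fun i _ => hle i) (Finset.le_sup' f (Finset.mem_univ j))

lemma bSup_eq_of_le_of_eq {m : ℕ} (hm : 1 ≤ m) {f g : Fin m → ℝ} {b : ℝ} {k : Fin m}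
    (hf : bSup hm f = b) (hgf : ∀ j, g j ≤ f j) (hk : f k = b) (hgk : g k = f k) :
    bSup hm g = b :=
  (bSup_eq_iff hm g b).2
    ⟨fun j => (hgf j).trans (((bSup_eq_iff hm f b).1 hf).1 j), k, hgk.trans hk⟩

lemma max_mul_nP_zero (a : ℝ) {a' : ℝ} (ha' : 0 ≤ a') : (a * 0) ⊔ (a' * nP 0) = a' := by
  simp [nP, ha']

lemma max_mul_nP_of_pos {a : ℝ} (a' : ℝ) {v : ℝ} (ha : 0 ≤ a) (hv : 0 < v) :
    (a * v) ⊔ (a' * nP v) = a * v := by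
  simp [nP, hv.ne', mul_nonneg ha hv.le]

namespace MaxProductEq

variable {m : ℕ} (hm : 1 ≤ m) (ap am : Fin m → ℝ) (b : ℝ)

def IsSolution (x : Fin m → ℝ) : Prop :=
  (∀ j, x j ∈ Icc (0:ℝ) 1) ∧ bSup hm (fun j => (ap j * x j) ⊔ (am j * nP (x j))) = b

variable {hm ap am b}

lemma IsSolution.update_half {x : Fin m → ℝ} (hx : IsSolution hm ap am b x)
    (hap : ∀ j, 0 ≤ ap j) {j k : Fin m} (hj : 0 < x j) (hkj : k ≠ j)
    (hk : (ap k * x k) ⊔ (am k * nP (x k)) = b) :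
    IsSolution hm ap am b (Function.update x j (x j / 2)) := by
  refine ⟨fun i => ?_, bSup_eq_of_le_of_eq hm hx.2 (fun i => ?_) hk ?_⟩
  · rcases eq_or_ne i j with rfl | hij
    · simp only [Function.update_self]
      constructor <;> linarith [(hx.1 i).2]
    · simpa only [Function.update_of_ne hij] using hx.1 i
  · rcases eq_or_ne i j with rfl | hij
    · rw [Function.update_self, max_mul_nP_of_pos _ (hap i) (half_pos hj),
        max_mul_nP_of_pos _ (hap i) hj]
      nlinarith [hap i]
    · rw [Function.update_of_ne hij]
  · rw [Function.update_of_ne hkj]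

lemma IsSolution.am_lt_of_eq_zero {x : Fin m → ℝ} (hx : IsSolution hm ap am b x)
    (ham : ∀ j, 0 ≤ am j) (hne : ∀ j, am j ≠ b) {j : Fin m} (hj : x j = 0) : am j < b := by
  have hle := ((bSup_eq_iff hm _ b).1 hx.2).1 j
  rw [hj, max_mul_nP_zero _ (ham j)] at hle
  exact hle.lt_of_ne (hne j)

lemma IsSolution.mul_apply_eq {x : Fin m → ℝ} (hx : IsSolution hm ap am b x)
    (hap : ∀ j, 0 ≤ ap j) (ham : ∀ j, 0 ≤ am j) (hne : ∀ j, am j ≠ b) {k : Fin m}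
    (hzero : ∀ j, j ≠ k → x j = 0) : ap k * x k = b := by
  obtain ⟨i, hi⟩ := ((bSup_eq_iff hm _ b).1 hx.2).2
  have hxi : x i ≠ 0 := fun h0 => hne i (by rwa [h0, max_mul_nP_zero _ (ham i)] at hi)
  obtain rfl : i = k := by_contra fun hik => hxi (hzero i hik)
  rwa [max_mul_nP_of_pos _ (hap i) ((hx.1 i).1.lt_of_ne' hxi)] at hi

lemma eq_single_of_mul_apply_eq {x : Fin m → ℝ} {k : Fin m} (hb : b ≠ 0)
    (hk : ap k * x k = b) (hzero : ∀ j, j ≠ k → x j = 0) : x = Pi.single k (b / ap k) := by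
  have hapk : ap k ≠ 0 := fun h0 => hb (by rw [← hk, h0, zero_mul])
  funext j
  rcases eq_or_ne j k with rfl | hjk
  · rw [Pi.single_eq_same, eq_div_iff hapk, mul_comm, hk]
  · rw [Pi.single_eq_of_ne hjk, hzero j hjk]

lemma isSolution_single (hb : 0 < b) (ham : ∀ j, 0 ≤ am j) {k : Fin m} (hbk : b ≤ ap k)
    (hlt : ∀ j, j ≠ k → am j < b) : IsSolution hm ap am b (Pi.single k (b / ap k)) := by
  have hapk : 0 < ap k := hb.trans_le hbk
  have hxk : 0 < b / ap k := div_pos hb hapk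
  refine ⟨fun j => ?_, (bSup_eq_iff hm _ b).2 ⟨fun j => ?_, k, ?_⟩⟩
  · rcases eq_or_ne j k with rfl | hjk
    · rw [Pi.single_eq_same]
      exact ⟨hxk.le, (div_le_one hapk).2 hbk⟩
    · rw [Pi.single_eq_of_ne hjk]
      exact ⟨le_rfl, zero_le_one⟩
  · rcases eq_or_ne j k with rfl | hjk
    · rw [Pi.single_eq_same, max_mul_nP_of_pos _ hapk.le hxk, mul_div_cancel₀ _ hapk.ne']
    · rw [Pi.single_eq_of_ne hjk, max_mul_nP_zero _ (ham j)]
      exact (hlt j hjk).le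
  · rw [Pi.single_eq_same, max_mul_nP_of_pos _ hapk.le hxk, mul_div_cancel₀ _ hapk.ne']

theorem setOf_minimal_isSolution (hap : ∀ j, 0 ≤ ap j) (ham : ∀ j, 0 ≤ am j) (hb : 0 < b)
    (hne : ∀ j, am j ≠ b) :
    {x | Minimal (IsSolution hm ap am b) x} =
      (fun k => Pi.single k (b / ap k)) '' {k | b ≤ ap k ∧ ∀ j, j ≠ k → am j < b} := by
  ext x
  simp only [mem_ofPred_eq, mem_image]
  constructor
  · intro hmin
    have hx := hmin.prop
    obtain ⟨k, hk⟩ := ((bSup_eq_iff hm _ b).1 hx.2).2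
    have hzero : ∀ j, j ≠ k → x j = 0 := by
      intro j hjk
      by_contra hj
      replace hj : 0 < x j := (hx.1 j).1.lt_of_ne' hj
      refine hmin.not_prop_of_lt ?_ (hx.update_half hap hj hjk.symm hk)
      exact update_lt_self_iff.2 (half_lt_self hj)
    have hxk := hx.mul_apply_eq hap ham hne hzero
    refine ⟨k, ⟨?_, fun j hjk => hx.am_lt_of_eq_zero ham hne (hzero j hjk)⟩,
      (eq_single_of_mul_apply_eq hb.ne' hxk hzero).symm⟩
    calc b = ap k * x k := hxk.symm
      _ ≤ ap k * 1 := mul_le_mul_of_nonneg_left (hx.1 k).2 (hap k)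
      _ = ap k := mul_one _
  · rintro ⟨k, ⟨hbk, hlt⟩, rfl⟩
    refine ⟨isSolution_single hb ham hbk hlt, fun y hy hyx => ?_⟩
    have hzero : ∀ j, j ≠ k → y j = 0 := fun j hjk =>
      le_antisymm ((hyx j).trans_eq (Pi.single_eq_of_ne hjk _)) (hy.1 j).1
    exact (eq_single_of_mul_apply_eq hb.ne' (hy.mul_apply_eq hap ham hne hzero) hzero).ge

end MaxProductEq

open MaxProductEq in
theorem stmt11_general (m : ℕ) (hm : 1 ≤ m) (ap am : Fin m → ℝ) (b : ℝ)
    (hap : ∀ j, ap j ∈ Icc (0:ℝ) 1) (ham : ∀ j, am j ∈ Icc (0:ℝ) 1)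
    (hb : b ∈ Ioc (0:ℝ) 1) (hne : ∀ j, am j ≠ b) :
    {x : Fin m → ℝ | (∀ j, x j ∈ Icc (0:ℝ) 1) ∧
        bSup hm (fun j => (ap j * x j) ⊔ (am j * nP (x j))) = b ∧
        ∀ y : Fin m → ℝ, (∀ j, y j ∈ Icc (0:ℝ) 1) →
          bSup hm (fun j => (ap j * y j) ⊔ (am j * nP (y j))) = b → ¬ y < x} =
      (fun k => fun j => if j = k then b / ap k else (0:ℝ)) ''
        {k : Fin m | b ≤ ap k ∧ ∀ j, j ≠ k → am j < b} ∧
    {x : Fin m → ℝ | (∀ j, x j ∈ Icc (0:ℝ) 1) ∧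
        bSup hm (fun j => (ap j * x j) ⊔ (am j * nP (x j))) = b ∧
        ∀ y : Fin m → ℝ, (∀ j, y j ∈ Icc (0:ℝ) 1) →
          bSup hm (fun j => (ap j * y j) ⊔ (am j * nP (y j))) = b → ¬ y < x}.ncard =
      {k : Fin m | b ≤ ap k ∧ ∀ j, j ≠ k → am j < b}.ncard := by
  have hsingle : (fun k => fun j => if j = k then b / ap k else (0:ℝ)) =
      fun k => Pi.single k (b / ap k) := by
    ext k j
    rw [Pi.single_apply]
  refine (fun hminimal => ⟨hminimal, hminimal ▸ InjOn.ncard_image ?_⟩) ?_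
  · rw [hsingle, ← setOf_minimal_isSolution (hm := hm) (fun j => (hap j).1) (fun j => (ham j).1)
      hb.1 hne]
    ext x
    simp only [mem_ofPred_eq, minimal_iff_forall_lt, IsSolution, and_assoc]
    exact and_congr_right fun _ => and_congr_right fun _ =>
      ⟨fun h y hyx hy => h y hy.1 hy.2 hyx, fun h y hy1 hy2 hyx => h hyx ⟨hy1, hy2⟩⟩
  · rintro k hk k' - hkk'
    by_contra hkk
    have hval := congrFun hkk' k
    simp only [if_neg hkk] at hval
    exact (div_pos hb.1 (hb.1.trans_le hk.1)).ne' hval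

theorem stmt11 (m : ℕ) (hm : 1 ≤ m) (ap am : Fin m → ℝ) (b : ℝ)
    (hap : ∀ j, ap j ∈ Icc (0:ℝ) 1) (ham : ∀ j, am j ∈ Icc (0:ℝ) 1)
    (hb : b ∈ Ioc (0:ℝ) 1) (hne : ∀ j, am j ≠ b)
    (hsolv : ∃ x : Fin m → ℝ, (∀ j, x j ∈ Icc (0:ℝ) 1) ∧
      bSup hm (fun j => (ap j * x j) ⊔ (am j * nP (x j))) = b) :
    {x : Fin m → ℝ | (∀ j, x j ∈ Icc (0:ℝ) 1) ∧
        bSup hm (fun j => (ap j * x j) ⊔ (am j * nP (x j))) = b ∧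
        ∀ y : Fin m → ℝ, (∀ j, y j ∈ Icc (0:ℝ) 1) →
          bSup hm (fun j => (ap j * y j) ⊔ (am j * nP (y j))) = b → ¬ y < x} =
      (fun k => fun j => if j = k then b / ap k else (0:ℝ)) ''
        {k : Fin m | b ≤ ap k ∧ ∀ j, j ≠ k → am j < b} ∧
    {x : Fin m → ℝ | (∀ j, x j ∈ Icc (0:ℝ) 1) ∧
        bSup hm (fun j => (ap j * x j) ⊔ (am j * nP (x j))) = b ∧
        ∀ y : Fin m → ℝ, (∀ j, y j ∈ Icc (0:ℝ) 1) →
          bSup hm (fun j => (ap j * y j) ⊔ (am j * nP (y j))) = b → ¬ y < x}.ncard =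
      {k : Fin m | b ≤ ap k ∧ ∀ j, j ≠ k → am j < b}.ncard :=
  stmt11_general m hm ap am b hap ham hb hne
end

section
/- Let n, m ≥ 1, a⁺, a⁻ : Fin n → Fin m → [0,1], b : Fin n → (0,1], and suppose J⁻ ⊆ Fin m satisfies: for every j ∈ J⁻ and every h ∈ Fin n, a⁻_{hj} ≤ b_h. Define x̂_j = 0 for j ∈ J⁻ and x̂_j = min_{h ∈ Fin n} (b_h ←_P a⁺_{hj}) for j ∉ J⁻. Then for every i ∈ Fin n, ⋁_{j} ((a⁺_{ij} · x̂_j) ⊔ (a⁻_{ij} · n_P(x̂_j))) ≤ b_i. -/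
open Set

theorem stmt14 (n m : ℕ) (hn : 1 ≤ n) (hm : 1 ≤ m)
    (ap am : Fin n → Fin m → ℝ) (b : Fin n → ℝ)
    (hap : ∀ i j, ap i j ∈ Icc (0:ℝ) 1) (ham : ∀ i j, am i j ∈ Icc (0:ℝ) 1)
    (hb : ∀ i, b i ∈ Ioc (0:ℝ) 1)
    (Jm : Finset (Fin m)) (hJm : ∀ j ∈ Jm, ∀ h, am h j ≤ b h) :
    ∀ i, bSup hm (fun j =>
      (ap i j * (if j ∈ Jm then (0:ℝ) else bInf hn (fun h => resP (b h) (ap h j)))) ⊔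
      (am i j * nP (if j ∈ Jm then (0:ℝ) else bInf hn (fun h => resP (b h) (ap h j))))) ≤ b i := by
  intro i
  apply Finset.sup'_le
  intro j _
  by_cases hj : j ∈ Jm
  · simp only [hj, if_true, mul_zero, nP, if_pos rfl, mul_one, sup_le_iff]
    exact ⟨(hb i).1.le, hJm j hj i⟩
  · simp only [hj, if_false]
    set x := bInf hn (fun h => resP (b h) (ap h j)) with hx
    have hxpos : 0 < x := by
      rw [hx, bInf]
      apply Finset.lt_inf'_iff _ |>.mpr
      intro h _
      unfold resP
      split
      · exact one_pos
      · exact lt_min one_pos (div_pos (hb h).1 (lt_of_le_of_ne (hap h j).1 (Ne.symm (by assumption))))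
    have hnP : nP x = 0 := by unfold nP; rw [if_neg hxpos.ne']
    rw [hnP, mul_zero, sup_le_iff]
    constructor
    · have hxle : x ≤ resP (b i) (ap i j) := by
        rw [hx, bInf]
        exact Finset.inf'_le _ (Finset.mem_univ i)
      rcases eq_or_lt_of_le (hap i j).1 with h0 | h0
      · rw [← h0, zero_mul]; exact (hb i).1.le
      · calc ap i j * x ≤ ap i j * resP (b i) (ap i j) := by
              apply mul_le_mul_of_nonneg_left hxle (hap i j).1
          _ ≤ ap i j * (b i / ap i j) := by
              unfold resP
              rw [if_neg h0.ne']
              exact mul_le_mul_of_nonneg_left (min_le_right _ _) (hap i j).1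
          _ = b i := mul_div_cancel₀ _ h0.ne'
    · exact (hb i).1.le
end
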